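/- arXiv:2510.11676 — 6 statements merged into one kernel-verified Lean document; each statement's English description precedes it below -/
import Mathlib

section
/- For every real number t and every α ∈ (1,2], it holds that e^t ≤ t + e^{|t|^α}. -/
/-! For `|t| ≤ 1` the second-order bound `eᵗ ≤ 1 + t + t²` and `t² ≤ |t|^α` (as `α ≤ 2`) give
`eᵗ ≤ t + 1 + |t|^α ≤ t + e^{|t|^α}`. For `|t| ≥ 1` we have `|t| ≤ |t|^α` (as `α ≥ 1`): if `t ≥ 0`
then already `eᵗ ≤ e^{|t|^α}`, and if `t < 0` then `eᵗ ≤ 1 = t + (1 + |t|) ≤ t + e^{|t|^α}`. -/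

open Real

lemma Real.exp_le_add_exp_of_abs_le_one {t u : ℝ} (ht : |t| ≤ 1) (hu : t ^ 2 ≤ u) :
    exp t ≤ t + exp u :=
  calc exp t ≤ 1 + t + t ^ 2 := by linarith [(abs_le.mp (abs_exp_sub_one_sub_id_le ht)).2]
    _ ≤ t + (u + 1) := by linarith
    _ ≤ t + exp u := by linarith [add_one_le_exp u]

lemma Real.exp_le_add_exp_of_abs_le {t u : ℝ} (hu : |t| ≤ u) : exp t ≤ t + exp u := by
  rcases le_or_gt 0 t with ht | ht
  · have : exp t ≤ exp u := exp_le_exp.mpr ((le_abs_self t).trans hu)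
    linarith
  · calc exp t ≤ 1 := exp_le_one_iff.mpr ht.le
      _ = t + (|t| + 1) := by rw [abs_of_neg ht]; ring
      _ ≤ t + exp u := by linarith [add_one_le_exp u]

lemma Real.sq_le_abs_rpow {t α : ℝ} (ht : |t| ≤ 1) (h0 : 0 ≤ α) (h2 : α ≤ 2) :
    t ^ 2 ≤ |t| ^ α := by
  rw [← sq_abs, ← rpow_two]
  exact rpow_le_rpow_of_exponent_ge' (abs_nonneg t) ht h0 h2

theorem stmt0 (t α : ℝ) (h1 : 1 < α) (h2 : α ≤ 2) :
    Real.exp t ≤ t + Real.exp (|t| ^ α) := by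
  rcases le_or_gt |t| 1 with ht | ht
  · exact exp_le_add_exp_of_abs_le_one ht (sq_le_abs_rpow ht (by linarith) h2)
  · exact exp_le_add_exp_of_abs_le (self_le_rpow_of_one_le ht.le h1.le)
end

section
/- Let α ∈ (1,2] and let Y be a real random variable with E[Y] = 0 and E[exp(|Y|^α)] ≤ e. Then for every λ ∈ [0,1], E[exp(λ·Y)] ≤ exp(λ^α). -/
/-!
Pointwise, `e^t ≤ t + e^{|t|^α}`. Applied to `t = λY` with `|λY|^α = λ^α |Y|^α`, this gives
`e^{λY} ≤ λY + (e^{|Y|^α})^{λ^α}`. Taking expectations kills the linear term since `E[Y] = 0`, and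
Jensen's inequality for the concave map `x ↦ x^{λ^α}` bounds the rest by `(E[e^{|Y|^α}])^{λ^α} ≤ e^{λ^α}`.
-/

open MeasureTheory

namespace Real

lemma exp_le_add_exp_abs (t : ℝ) : exp t ≤ t + exp |t| := by
  rcases le_or_gt 0 t with ht | ht
  · rw [abs_of_nonneg ht]
    linarith
  · rw [abs_of_neg ht]
    linarith [add_one_le_exp (-t), exp_le_one_iff.2 ht.le]

lemma exp_le_add_exp_abs_rpow {α : ℝ} (h1 : 1 ≤ α) (h2 : α ≤ 2) (t : ℝ) :
    exp t ≤ t + exp (|t| ^ α) := by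
  rcases le_or_gt |t| 1 with hsmall | hlarge
  · have hquad : exp t ≤ 1 + t + t ^ 2 := by
      linarith [(abs_le.1 (abs_exp_sub_one_sub_id_le hsmall)).2]
    have hsq : t ^ 2 ≤ |t| ^ α := by
      rw [← sq_abs, ← rpow_two]
      exact rpow_le_rpow_of_exponent_ge' (abs_nonneg t) hsmall (by linarith) h2
    linarith [add_one_le_exp (|t| ^ α)]
  · have hpow : |t| ≤ |t| ^ α := self_le_rpow_of_one_le hlarge.le h1
    linarith [exp_le_add_exp_abs t, exp_le_exp.2 hpow]

lemma exp_mul_le_add_exp_abs_rpow_rpow {α l : ℝ} (h1 : 1 ≤ α) (h2 : α ≤ 2) (hl : 0 ≤ l)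
    (y : ℝ) : exp (l * y) ≤ l * y + exp (|y| ^ α) ^ (l ^ α) := by
  have hscale : |l * y| ^ α = l ^ α * |y| ^ α := by
    rw [abs_mul, abs_of_nonneg hl, mul_rpow hl (abs_nonneg y)]
  rw [← exp_mul, mul_comm (|y| ^ α), ← hscale]
  exact exp_le_add_exp_abs_rpow h1 h2 (l * y)

end Real

namespace MeasureTheory

variable {Ω : Type*} [MeasurableSpace Ω] {μ : Measure Ω} {f : Ω → ℝ} {s : ℝ}

lemma Integrable.rpow_of_le_one [IsFiniteMeasure μ] (hf : Integrable f μ) (hf0 : 0 ≤ᵐ[μ] f)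
    (hs0 : 0 ≤ s) (hs1 : s ≤ 1) : Integrable (fun ω => f ω ^ s) μ := by
  refine ((integrable_const 1).add hf).mono'
    ((Real.continuous_rpow_const hs0).comp_aestronglyMeasurable hf.aestronglyMeasurable) ?_
  filter_upwards [hf0] with ω (hω : 0 ≤ f ω)
  rw [Real.norm_eq_abs, abs_of_nonneg (Real.rpow_nonneg hω s), Pi.add_apply]
  rcases le_or_gt (f ω) 1 with hle | hgt
  · linarith [Real.rpow_le_one hω hle hs0]
  · linarith [Real.rpow_le_self_of_one_le hgt.le hs1]

lemma integral_rpow_le_rpow_integral [IsProbabilityMeasure μ] (hf : Integrable f μ)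
    (hf0 : 0 ≤ᵐ[μ] f) (hs0 : 0 ≤ s) (hs1 : s ≤ 1) :
    ∫ ω, f ω ^ s ∂μ ≤ (∫ ω, f ω ∂μ) ^ s :=
  (Real.concaveOn_rpow hs0 hs1).le_map_integral (Real.continuous_rpow_const hs0).continuousOn
    isClosed_Ici hf0 hf (hf.rpow_of_le_one hf0 hs0 hs1)

end MeasureTheory

theorem stmt4 {Ω : Type*} [MeasurableSpace Ω] (μ : Measure Ω) [IsProbabilityMeasure μ]
    (α : ℝ) (h1 : 1 < α) (h2 : α ≤ 2)
    (Y : Ω → ℝ) (hY : Integrable Y μ) (hmean : ∫ ω, Y ω ∂μ = 0)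
    (hInt : Integrable (fun ω => Real.exp (|Y ω| ^ α)) μ)
    (hE : ∫ ω, Real.exp (|Y ω| ^ α) ∂μ ≤ Real.exp 1) :
    ∀ l ∈ Set.Icc (0 : ℝ) 1, ∫ ω, Real.exp (l * Y ω) ∂μ ≤ Real.exp (l ^ α) := by
  rintro l ⟨hl0, hl1⟩
  have hs0 : 0 ≤ l ^ α := Real.rpow_nonneg hl0 α
  have hs1 : l ^ α ≤ 1 := Real.rpow_le_one hl0 hl1 (by linarith)
  have hexp0 : 0 ≤ᵐ[μ] fun ω => Real.exp (|Y ω| ^ α) := ae_of_all _ fun ω => (Real.exp_pos _).le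
  have hpow := hInt.rpow_of_le_one hexp0 hs0 hs1
  calc ∫ ω, Real.exp (l * Y ω) ∂μ
      ≤ ∫ ω, (l * Y ω + Real.exp (|Y ω| ^ α) ^ l ^ α) ∂μ :=
        integral_mono_of_nonneg (ae_of_all _ fun ω => (Real.exp_pos _).le)
          ((hY.const_mul l).add hpow)
          (ae_of_all _ (Real.exp_mul_le_add_exp_abs_rpow_rpow h1.le h2 hl0 <| Y ·))
    _ = ∫ ω, Real.exp (|Y ω| ^ α) ^ l ^ α ∂μ := by
        rw [integral_add (hY.const_mul l) hpow, integral_const_mul, hmean, mul_zero, zero_add]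
    _ ≤ (∫ ω, Real.exp (|Y ω| ^ α) ∂μ) ^ l ^ α :=
        integral_rpow_le_rpow_integral hInt hexp0 hs0 hs1
    _ ≤ Real.exp 1 ^ l ^ α := Real.rpow_le_rpow (integral_nonneg fun ω => (Real.exp_pos _).le) hE hs0
    _ = Real.exp (l ^ α) := Real.exp_one_rpow _
end

section
/- Let α ∈ (1,2), set α' = α/(α-1), and let Y be a real random variable with E[exp(|Y|^α)] ≤ e. Then for every λ ≥ 1, E[exp(λ·Y)] ≤ exp(λ^{α'}). -/
open MeasureTheory

theorem stmt5 {Ω : Type*} [MeasurableSpace Ω] (μ : Measure Ω) [IsProbabilityMeasure μ]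
    (α : ℝ) (h1 : 1 < α) (h2 : α < 2)
    (Y : Ω → ℝ)
    (hInt : Integrable (fun ω => Real.exp (|Y ω| ^ α)) μ)
    (hE : ∫ ω, Real.exp (|Y ω| ^ α) ∂μ ≤ Real.exp 1) :
    ∀ l : ℝ, 1 ≤ l → ∫ ω, Real.exp (l * Y ω) ∂μ ≤ Real.exp (l ^ (α / (α - 1))) := by
  intro l hl
  set α' := α / (α - 1) with hα'def
  have hα0 : (0:ℝ) < α := by linarith
  have hconj : α.HolderConjugate α' :=
    (Real.holderConjugate_iff_eq_conjExponent h1).2 rfl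
  have hα'1 : 1 < α' := hconj.symm.lt
  -- a.e. measurability of |Y|^α
  have hYm : AEMeasurable (fun ω => |Y ω| ^ α) μ := by
    have h := hInt.aestronglyMeasurable.aemeasurable
    have : AEMeasurable (fun ω => Real.log (Real.exp (|Y ω| ^ α))) μ :=
      Real.measurable_log.comp_aemeasurable h
    simpa only [Real.log_exp] using this
  set f : Ω → ℝ := fun ω => Real.exp (|Y ω| ^ α / α) with hfdef
  have hfm : AEMeasurable f μ :=
    Real.measurable_exp.comp_aemeasurable (hYm.div_const α)
  have hfpos : ∀ ω, 0 < f ω := fun ω => Real.exp_pos _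
  have hfpow : ∀ ω, f ω ^ α = Real.exp (|Y ω| ^ α) := by
    intro ω
    rw [hfdef]
    rw [← Real.exp_mul, div_mul_cancel₀ _ (ne_of_gt hα0)]
  -- f is in L^α
  have hfLp : MemLp f (ENNReal.ofReal α) μ := by
    have hq0 : (ENNReal.ofReal α) ≠ 0 := by
      simp [ENNReal.ofReal_eq_zero, not_le, hα0]
    have hqt : (ENNReal.ofReal α) ≠ ⊤ := ENNReal.ofReal_ne_top
    have := (memLp_norm_rpow_iff (q := ENNReal.ofReal α) (p := ENNReal.ofReal α)
      hfm.aestronglyMeasurable hq0 hqt)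
    rw [ENNReal.div_self hq0 hqt] at this
    apply this.1
    rw [memLp_one_iff_integrable]
    have heq : (fun x => ‖f x‖ ^ (ENNReal.ofReal α).toReal) =
        fun ω => Real.exp (|Y ω| ^ α) := by
      funext x
      rw [ENNReal.toReal_ofReal hα0.le, Real.norm_of_nonneg (hfpos x).le, hfpow x]
    rw [heq]
    exact hInt
  -- Hölder / Jensen step: ∫ f ≤ exp (1/α)
  have hJensen : ∫ ω, f ω ∂μ ≤ Real.exp (1 / α) := by
    have hgLp : MemLp (fun _ : Ω => (1:ℝ)) (ENNReal.ofReal α') μ := memLp_const 1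
    have h := integral_mul_le_Lp_mul_Lq_of_nonneg hconj
      (Filter.Eventually.of_forall fun ω => (hfpos ω).le)
      (Filter.Eventually.of_forall fun _ => zero_le_one) hfLp hgLp
    simp only [mul_one, Real.one_rpow] at h
    have h1int : ∫ _ : Ω, (1:ℝ) ∂μ = 1 := by simp
    rw [h1int, Real.one_rpow, mul_one] at h
    refine h.trans ?_
    have hnn : 0 ≤ ∫ ω, f ω ^ α ∂μ :=
      integral_nonneg fun ω => Real.rpow_nonneg (hfpos ω).le α
    have hle : ∫ ω, f ω ^ α ∂μ ≤ Real.exp 1 := by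
      simpa only [hfpow] using hE
    calc (∫ ω, f ω ^ α ∂μ) ^ (1/α) ≤ (Real.exp 1) ^ (1/α) :=
          Real.rpow_le_rpow hnn hle (by positivity)
      _ = Real.exp (1/α) := by rw [← Real.exp_mul, one_mul]
  -- case split on integrability of exp (l * Y)
  by_cases hI : Integrable (fun ω => Real.exp (l * Y ω)) μ
  · -- pointwise bound
    have hlpos : (0:ℝ) < l := lt_of_lt_of_le zero_lt_one hl
    have hpt : ∀ ω, Real.exp (l * Y ω) ≤ Real.exp (l ^ α' / α') * f ω := by
      intro ω
      rw [hfdef, ← Real.exp_add]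
      apply Real.exp_le_exp.2
      have hy : l * Y ω ≤ |Y ω| * l := by
        calc l * Y ω ≤ |l * Y ω| := le_abs_self _
          _ = |Y ω| * l := by rw [abs_mul, abs_of_pos hlpos, mul_comm]
      refine hy.trans ?_
      have := Real.young_inequality_of_nonneg (abs_nonneg (Y ω)) hlpos.le hconj
      linarith
    have hgint : Integrable (fun ω => Real.exp (l ^ α' / α') * f ω) μ :=
      (hfLp.integrable (by
        rw [← ENNReal.ofReal_one]
        exact ENNReal.ofReal_le_ofReal h1.le)).const_mul _
    have hmono : ∫ ω, Real.exp (l * Y ω) ∂μ ≤ ∫ ω, Real.exp (l ^ α' / α') * f ω ∂μ :=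
      integral_mono hI hgint fun ω => hpt ω
    rw [integral_const_mul] at hmono
    refine hmono.trans ?_
    have hstep : Real.exp (l ^ α' / α') * ∫ ω, f ω ∂μ ≤
        Real.exp (l ^ α' / α') * Real.exp (1 / α) :=
      mul_le_mul_of_nonneg_left hJensen (Real.exp_pos _).le
    refine hstep.trans ?_
    rw [← Real.exp_add]
    apply Real.exp_le_exp.2
    have hone : (1:ℝ) ≤ l ^ α' := Real.one_le_rpow hl (by positivity)
    have hsum : 1 / α + 1 / α' = 1 := by
      have := hconj.inv_add_inv_eq_one
      rw [one_div, one_div]; linarith [this]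
    have hα'pos : (0:ℝ) < α' := by linarith
    have : l ^ α' / α' + 1 / α ≤ l ^ α' / α' + l ^ α' / α := by
      have : 1 / α ≤ l ^ α' / α := by gcongr
      linarith
    refine this.trans ?_
    have : l ^ α' / α' + l ^ α' / α = l ^ α' * (1/α' + 1/α) := by ring
    rw [this]
    have : (1:ℝ)/α' + 1/α = 1 := by linarith [hsum]
    rw [this, mul_one]
  · rw [integral_undef hI]
    exact (Real.exp_pos _).le
end

section
/- Let α ∈ (1,2], set α' = α/(α-1), and let Y be a real random variable with E[Y] = 0. Let ς > 0 and suppose E[exp(|Y/ς|^α)] ≤ e. Then for every τ ≥ 0, E[exp(τ·Y)] ≤ exp(max{(τς)^α, (τς)^{α'}}). -/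
open MeasureTheory

lemma lquad {x : ℝ} (hx : 0 ≤ x) : 1 + x + x^2/2 ≤ Real.exp x := by
  have := Real.sum_le_exp_of_nonneg hx 3
  simp [Finset.sum_range_succ, Nat.factorial] at this
  nlinarith [this]

-- (ii'): s * exp s * exp (-(1/s)) ≤ exp s - 1 for s ∈ (0,1]
lemma lii {s : ℝ} (hs : 0 < s) (hs1 : s ≤ 1) :
    s * Real.exp s * Real.exp (-(1/s)) ≤ Real.exp s - 1 := by
  have h1 : 1 ≤ 1/s := by rw [le_div_iff₀ hs]; linarith
  have h2 : Real.exp (-(1/s)) ≤ Real.exp (-1) := Real.exp_le_exp.2 (by linarith)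
  have h3 : Real.exp (-1) ≤ 1/2 := by
    have k1 := lquad (le_of_lt one_pos)
    have k2 : Real.exp (-1) * Real.exp 1 = 1 := by
      rw [← Real.exp_add]; norm_num
    nlinarith [Real.exp_pos (-1)]
  have h4 : Real.exp (-s) ≤ 1 - s + s^2/2 := by
    have key : 1 ≤ (1 - s + s^2/2) * Real.exp s := by nlinarith [lquad hs.le]
    have k2 : Real.exp (-s) * Real.exp s = 1 := by rw [← Real.exp_add]; norm_num
    nlinarith [Real.exp_pos s, Real.exp_pos (-s)]
  -- s * exp(-(1/s)) ≤ 1 - exp(-s)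
  have h5 : s * Real.exp (-(1/s)) ≤ 1 - Real.exp (-s) := by nlinarith
  have k2 : Real.exp (-s) * Real.exp s = 1 := by rw [← Real.exp_add]; norm_num
  nlinarith [Real.exp_pos s]

-- (i): s^2 * exp s * (1 - exp (-(1/s))) ≤ exp s - 1 for s ∈ (0,1]
lemma li {s : ℝ} (hs : 0 < s) (hs1 : s ≤ 1) :
    s^2 * Real.exp s * (1 - Real.exp (-(1/s))) ≤ Real.exp s - 1 := by
  have hE : 1 + s ≤ Real.exp s := by linarith [Real.add_one_le_exp s]
  have hEG : s + 1 - 1/s ≤ Real.exp s * Real.exp (-(1/s)) := by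
    rw [← Real.exp_add]
    have := Real.add_one_le_exp (s + -(1/s))
    linarith
  -- s^2 * (EG) ≥ s^2 + s^3 - s
  have h6 : s^2 + s^3 - s ≤ s^2 * (Real.exp s * Real.exp (-(1/s))) := by
    have : s^2 * (s + 1 - 1/s) ≤ s^2 * (Real.exp s * Real.exp (-(1/s))) :=
      mul_le_mul_of_nonneg_left hEG (by positivity)
    have hss : s^2 * (1/s) = s := by field_simp
    nlinarith [this]
  -- E * (s^2 - 1) ≤ (s+1)*(s^2-1)
  nlinarith [mul_nonneg (sub_nonneg.2 hE) (by nlinarith : (0:ℝ) ≤ 1 - s^2)]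

-- (♦): s^2 * exp s * (1 - exp (-(v/s))) ≤ v * (exp s - 1), s ∈ (0,1], v ≥ 1
lemma ldiamond {s v : ℝ} (hs : 0 < s) (hs1 : s ≤ 1) (hv : 1 ≤ v) :
    s^2 * Real.exp s * (1 - Real.exp (-(v/s))) ≤ v * (Real.exp s - 1) := by
  have hG : Real.exp (-(v/s)) = Real.exp (-(1/s)) * Real.exp (-((v-1)/s)) := by
    rw [← Real.exp_add]; congr 1; field_simp; ring
  have h7 : 1 - (v-1)/s ≤ Real.exp (-((v-1)/s)) := by
    have := Real.add_one_le_exp (-((v-1)/s)); linarith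
  have hGpos : 0 < Real.exp (-(1/s)) := Real.exp_pos _
  -- 1 - exp(-(v/s)) ≤ (1 - exp(-(1/s))) + exp(-(1/s)) * (v-1)/s
  have h8 : 1 - Real.exp (-(v/s)) ≤ (1 - Real.exp (-(1/s))) + Real.exp (-(1/s)) * ((v-1)/s) := by
    rw [hG]
    nlinarith [mul_le_mul_of_nonneg_left h7 hGpos.le]
  have hA : (0:ℝ) ≤ s^2 * Real.exp s := by positivity
  have key := li hs hs1
  have key2 := lii hs hs1
  -- s^2*E*exp(-(1/s))*(v-1)/s = s*E*exp(-(1/s))*(v-1)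
  have hfact : s^2 * Real.exp s * (Real.exp (-(1/s)) * ((v-1)/s))
      = (s * Real.exp s * Real.exp (-(1/s))) * (v-1) := by field_simp
  have h9 : (s * Real.exp s * Real.exp (-(1/s))) * (v-1) ≤ (Real.exp s - 1) * (v-1) :=
    mul_le_mul_of_nonneg_right key2 (by linarith)
  nlinarith [mul_le_mul_of_nonneg_left h8 hA]



lemma ltaylor {x : ℝ} (hx : |x| ≤ 1) :
    Real.exp x - x - 1 ≤ x^2/2 + (2/9)*|x|^3 := by
  have h := Real.exp_bound hx (by norm_num : (0:ℕ) < 3)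
  simp [Finset.sum_range_succ, Nat.factorial] at h
  have := abs_le.1 h
  nlinarith [this.2]

-- exp(-u) + u - 1 ≤ exp u - u - 1 for u ≥ 0  (i.e. sinh u ≥ u)
lemma lsinh {u : ℝ} (hu : 0 ≤ u) : Real.exp (-u) + u - 1 ≤ Real.exp u - u - 1 := by
  have h := Real.self_le_sinh_iff.2 hu
  rw [Real.sinh_eq] at h
  linarith


lemma lclaimC {s u : ℝ} (hs : 0 < s) (hs1 : s ≤ 1) (hu : 1 ≤ u) :
    (Real.exp 1 - 1) * (Real.exp u - u - 1) ≤ (Real.exp s - 1) * (Real.exp (u/s) - 1) := by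
  set H : ℝ → ℝ := fun σ => (Real.exp σ - 1) * (Real.exp (u/σ) - 1) with hH
  have hd : ∀ σ : ℝ, 0 < σ → HasDerivAt H
      (Real.exp σ * (Real.exp (u/σ) - 1) + (Real.exp σ - 1) * (Real.exp (u/σ) * (-(u/σ^2)))) σ := by
    intro σ hσ
    have h1 : HasDerivAt (fun σ : ℝ => Real.exp σ - 1) (Real.exp σ) σ :=
      (Real.hasDerivAt_exp σ).sub_const 1
    have h2 : HasDerivAt (fun σ : ℝ => u/σ) (-(u/σ^2)) σ := by
      have := ((hasDerivAt_inv hσ.ne').const_mul u)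
      simpa [div_eq_mul_inv, mul_comm, neg_div, mul_div_assoc] using this
    have h3 : HasDerivAt (fun σ : ℝ => Real.exp (u/σ)) (Real.exp (u/σ) * (-(u/σ^2))) σ :=
      (Real.hasDerivAt_exp (u/σ)).comp σ h2
    exact h1.mul (h3.sub_const 1)
  have hanti : AntitoneOn H (Set.Icc s 1) := by
    apply antitoneOn_of_deriv_nonpos (convex_Icc s 1)
    · intro σ hσ
      exact ((hd σ (lt_of_lt_of_le hs hσ.1)).continuousAt).continuousWithinAt
    · intro σ hσ
      rw [interior_Icc] at hσ
      exact ((hd σ (hs.trans hσ.1)).differentiableAt).differentiableWithinAt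
    · intro σ hσ
      rw [interior_Icc] at hσ
      have hσ0 : 0 < σ := hs.trans hσ.1
      rw [(hd σ hσ0).deriv]
      have hσ2 : 0 < σ^2 := by positivity
      have key := ldiamond hσ0 hσ.2.le hu
      have hexp : (1 - Real.exp (-(u/σ))) * Real.exp (u/σ) = Real.exp (u/σ) - 1 := by
        have : Real.exp (-(u/σ)) * Real.exp (u/σ) = 1 := by rw [← Real.exp_add]; simp
        nlinarith [this]
      have key2 : σ^2 * Real.exp σ * (Real.exp (u/σ) - 1) ≤
          u * (Real.exp σ - 1) * Real.exp (u/σ) := by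
        have := mul_le_mul_of_nonneg_right key (Real.exp_pos (u/σ)).le
        rw [mul_assoc (σ^2 * Real.exp σ), hexp] at this
        nlinarith [this]
      have e1 : (Real.exp σ - 1) * (Real.exp (u/σ) * (-(u/σ^2)))
          = -(u * (Real.exp σ - 1) * Real.exp (u/σ))/σ^2 := by field_simp
      rw [e1, neg_div, add_neg_le_iff_le_add, zero_add, ← sub_nonneg, sub_nonneg,
        le_div_iff₀ hσ2]
      nlinarith [key2]
  have h1mem : (1:ℝ) ∈ Set.Icc s 1 := ⟨hs1, le_refl 1⟩
  have hsmem : s ∈ Set.Icc s 1 := ⟨le_refl s, hs1⟩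
  have := hanti hsmem h1mem hs1
  have hH1 : H 1 = (Real.exp 1 - 1) * (Real.exp u - 1) := by simp [hH]
  have hE1 : (0:ℝ) ≤ Real.exp 1 - 1 := by nlinarith [Real.add_one_le_exp (1:ℝ)]
  have : (Real.exp 1 - 1) * (Real.exp u - u - 1) ≤ H 1 := by
    rw [hH1]; apply mul_le_mul_of_nonneg_left _ hE1; linarith
  calc (Real.exp 1 - 1) * (Real.exp u - u - 1) ≤ H 1 := this
    _ ≤ H s := hanti hsmem h1mem hs1
    _ = (Real.exp s - 1) * (Real.exp (u/s) - 1) := rfl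


set_option maxHeartbeats 1000000 in
lemma lstar {α t x : ℝ} (h1 : 1 < α) (h2 : α ≤ 2) (ht0 : 0 ≤ t) (ht1 : t ≤ 1) :
    (Real.exp 1 - 1) * (Real.exp (t*x) - t*x - 1) ≤
      (Real.exp (t ^ α) - 1) * (Real.exp (|x| ^ α) - 1) := by
  have hα0 : 0 < α := by linarith
  have hE1 : (0:ℝ) ≤ Real.exp 1 - 1 := by nlinarith [Real.add_one_le_exp (1:ℝ)]
  have hy0 : (0:ℝ) ≤ |x| ^ α := Real.rpow_nonneg (abs_nonneg x) α
  have hys : (0:ℝ) ≤ Real.exp (|x| ^ α) - 1 := by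
    nlinarith [Real.add_one_le_exp (|x| ^ α)]
  rcases eq_or_lt_of_le ht0 with ht | ht
  · -- t = 0
    rw [← ht, Real.zero_rpow (ne_of_gt hα0)]
    simp
  rcases eq_or_ne x 0 with hx | hx
  · -- x = 0
    subst hx
    have hss : (0:ℝ) ≤ Real.exp (t ^ α) - 1 := by
      nlinarith [Real.add_one_le_exp (t ^ α), Real.rpow_nonneg ht0 α]
    simp only [mul_zero, Real.exp_zero]
    have : (Real.exp 1 - 1) * (1 - 0 - 1) = 0 := by ring
    rw [this]
    positivity
  -- main case t > 0, x ≠ 0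
  set s := t ^ α with hsdef
  set y := |x| ^ α with hydef
  set u := t * |x| with hudef
  have hxpos : 0 < |x| := abs_pos.2 hx
  have hu0 : 0 < u := mul_pos ht hxpos
  have hs0 : 0 < s := Real.rpow_pos_of_pos ht α
  have hs1 : s ≤ 1 := Real.rpow_le_one ht0 ht1 hα0.le
  have hsy : s * y = u ^ α := (Real.mul_rpow ht0 (abs_nonneg x)).symm
  have habs : |t * x| = u := by rw [abs_mul, abs_of_nonneg ht0]
  have hsq : (t*x)^2 = u^2 := by rw [← sq_abs, habs]
  have hcub : |t*x|^3 = u^3 := by rw [habs]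
  have hexps : s + s^2/2 ≤ Real.exp s - 1 := by linarith [lquad hs0.le]
  have hexpy : y + y^2/2 ≤ Real.exp y - 1 := by linarith [lquad hy0]
  rcases le_or_gt u 1 with hu1 | hu1
  · -- small case : u ≤ 1
    have htay := ltaylor (show |t*x| ≤ 1 by rw [habs]; exact hu1)
    have hL : Real.exp (t*x) - t*x - 1 ≤ u^2/2 + (2/9)*u^3 := by
      rw [← hsq, ← hcub]; exact htay
    -- u^2 ≤ u^α
    have hc2 : u^2 ≤ u ^ α := by
      have := Real.rpow_le_rpow_of_exponent_ge hu0 hu1 h2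
      rwa [show ((2:ℝ)) = ((2:ℕ):ℝ) by norm_num, Real.rpow_natCast] at this
    -- AM-GM : 2 * sqrt((s*y)^3) ≤ s*y^2 + s^2*y
    have hA : (0:ℝ) ≤ s * y^2 := by positivity
    have hB : (0:ℝ) ≤ s^2 * y := by positivity
    have hamgm : 2 * Real.sqrt ((s*y)^3) ≤ s*y^2 + s^2*y := by
      have h2ab := two_mul_le_add_sq (Real.sqrt (s*y^2)) (Real.sqrt (s^2*y))
      rw [Real.sq_sqrt hA, Real.sq_sqrt hB, mul_assoc, ← Real.sqrt_mul hA] at h2ab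
      have : s * y^2 * (s^2 * y) = (s*y)^3 := by ring
      rw [this] at h2ab
      linarith
    -- sqrt((s*y)^3) ≥ u^3
    have hsqrt : u^3 ≤ Real.sqrt ((s*y)^3) := by
      have h6 : (u^3)^2 ≤ (s*y)^3 := by
        rw [hsy]
        calc (u^3)^2 = (u^2)^3 := by ring
          _ ≤ (u ^ α)^3 := pow_le_pow_left₀ (sq_nonneg u) hc2 3
      calc u^3 = Real.sqrt ((u^3)^2) := (Real.sqrt_sq (by positivity)).symm
        _ ≤ Real.sqrt ((s*y)^3) := Real.sqrt_le_sqrt h6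
    -- RHS ≥ u^2 + u^3
    have hR : u^2 + u^3 ≤ (Real.exp s - 1) * (Real.exp y - 1) := by
      have hmul : (s + s^2/2) * (y + y^2/2) ≤ (Real.exp s - 1) * (Real.exp y - 1) := by
        exact mul_le_mul hexps hexpy (by positivity) (by nlinarith [lquad hs0.le])
      have hexpand : (s + s^2/2) * (y + y^2/2)
          = s*y + (s*y^2 + s^2*y)/2 + (s*y)^2/4 := by ring
      linarith [hmul, hexpand, hamgm, hsqrt, hc2, hsy, sq_nonneg (s*y)]
    have hexp1 : Real.exp 1 ≤ 2.7182818286 := Real.exp_one_lt_d9.le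
    have he2 : Real.exp 1 - 1 ≤ 2 := by linarith [hexp1]
    have hnn : (0:ℝ) ≤ u^2/2 + (2/9)*u^3 := by positivity
    have hLHS : (Real.exp 1 - 1) * (Real.exp (t*x) - t*x - 1) ≤ u^2 + u^3 := by
      calc (Real.exp 1 - 1) * (Real.exp (t*x) - t*x - 1)
          ≤ (Real.exp 1 - 1) * (u^2/2 + (2/9)*u^3) := mul_le_mul_of_nonneg_left hL hE1
        _ ≤ 2 * (u^2/2 + (2/9)*u^3) := mul_le_mul_of_nonneg_right he2 hnn
        _ ≤ u^2 + u^3 := by nlinarith [pow_nonneg hu0.le 3]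
    linarith
  · -- large case : u > 1
    have hstep1 : Real.exp (t*x) - t*x - 1 ≤ Real.exp u - u - 1 := by
      rcases le_or_gt 0 x with hx0 | hx0
      · rw [hudef, abs_of_nonneg hx0]
      · have hneg : t*x = -u := by rw [hudef, abs_of_neg hx0]; ring
        rw [hneg]
        linarith [lsinh (by linarith : (0:ℝ) ≤ u)]
    have hstep2 := lclaimC hs0 hs1 hu1.le
    have hxeq : |x| = u/t := by field_simp [hudef]; ring
    have hus : u/s ≤ y := by
      have hua : u ≤ u ^ α := by
        have := Real.rpow_le_rpow_of_exponent_le hu1.le h1.le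
        rwa [Real.rpow_one] at this
      have hyeq : y = u ^ α / s := by
        rw [hydef, hxeq, Real.div_rpow (by linarith) ht0]
      rw [hyeq]
      gcongr
    have hys' : (0:ℝ) ≤ Real.exp s - 1 := by nlinarith [lquad hs0.le]
    calc (Real.exp 1 - 1) * (Real.exp (t*x) - t*x - 1)
        ≤ (Real.exp 1 - 1) * (Real.exp u - u - 1) := mul_le_mul_of_nonneg_left hstep1 hE1
      _ ≤ (Real.exp s - 1) * (Real.exp (u/s) - 1) := hstep2
      _ ≤ (Real.exp s - 1) * (Real.exp y - 1) := by
          apply mul_le_mul_of_nonneg_left _ hys'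
          have := Real.exp_le_exp.2 hus
          linarith


theorem stmt6 {Ω : Type*} [MeasurableSpace Ω] (μ : Measure Ω) [IsProbabilityMeasure μ]
    (α ς : ℝ) (h1 : 1 < α) (h2 : α ≤ 2) (hς : 0 < ς)
    (Y : Ω → ℝ) (hY : Integrable Y μ) (hmean : ∫ ω, Y ω ∂μ = 0)
    (hInt : Integrable (fun ω => Real.exp (|Y ω / ς| ^ α)) μ)
    (hE : ∫ ω, Real.exp (|Y ω / ς| ^ α) ∂μ ≤ Real.exp 1) :
    ∀ τ : ℝ, 0 ≤ τ →
      ∫ ω, Real.exp (τ * Y ω) ∂μ ≤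
        Real.exp (max ((τ * ς) ^ α) ((τ * ς) ^ (α / (α - 1)))) := by
  intro τ hτ
  have hςne : ς ≠ 0 := ne_of_gt hς
  have hα0 : 0 < α := by linarith
  have ht0 : 0 ≤ τ * ς := mul_nonneg hτ hς.le
  have hEe : (0:ℝ) < Real.exp 1 - 1 := by nlinarith [Real.add_one_le_exp (1:ℝ)]
  have hconv : ∀ ω, (τ * ς) * (Y ω / ς) = τ * Y ω := by
    intro ω; field_simp
  rcases le_or_gt (τ * ς) 1 with ht1 | ht1
  · -- small case : τς ≤ 1
    set C := (Real.exp ((τ * ς) ^ α) - 1)/(Real.exp 1 - 1) with hC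
    have htα : 0 ≤ (τ * ς) ^ α := Real.rpow_nonneg ht0 α
    have hC0 : 0 ≤ C := by
      apply div_nonneg _ hEe.le
      nlinarith [Real.add_one_le_exp ((τ * ς) ^ α)]
    have hpt : ∀ ω, Real.exp (τ * Y ω)
        ≤ 1 + τ * Y ω + C * (Real.exp (|Y ω / ς| ^ α) - 1) := by
      intro ω
      have hst := lstar h1 h2 ht0 ht1 (x := Y ω / ς)
      rw [hconv ω] at hst
      have h' : Real.exp (τ * Y ω) - τ * Y ω - 1
          ≤ C * (Real.exp (|Y ω / ς| ^ α) - 1) := by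
        rw [hC, div_mul_eq_mul_div, le_div_iff₀ hEe]
        nlinarith [hst]
      linarith
    have hint1 : Integrable (fun ω => 1 + τ * Y ω) μ :=
      (integrable_const 1).add (hY.const_mul τ)
    have hint2 : Integrable (fun ω => C * (Real.exp (|Y ω / ς| ^ α) - 1)) μ :=
      (hInt.sub (integrable_const 1)).const_mul C
    have hint : Integrable (fun ω => 1 + τ * Y ω + C * (Real.exp (|Y ω / ς| ^ α) - 1)) μ :=
      hint1.add hint2
    have hmono := integral_mono_of_nonneg
      (Filter.Eventually.of_forall fun ω => (Real.exp_pos (τ * Y ω)).le) hint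
      (Filter.Eventually.of_forall hpt)
    have hcalc : ∫ ω, (1 + τ * Y ω + C * (Real.exp (|Y ω / ς| ^ α) - 1)) ∂μ
        = 1 + C * ((∫ ω, Real.exp (|Y ω / ς| ^ α) ∂μ) - 1) := by
      rw [integral_add hint1 hint2, integral_add (integrable_const 1) (hY.const_mul τ),
        integral_const, integral_const_mul, integral_const_mul,
        integral_sub hInt (integrable_const 1), integral_const, hmean]
      simp
    have hfin : ∫ ω, Real.exp (τ * Y ω) ∂μ ≤ Real.exp ((τ * ς) ^ α) := by
      rw [hcalc] at hmono
      have : C * ((∫ ω, Real.exp (|Y ω / ς| ^ α) ∂μ) - 1) ≤ C * (Real.exp 1 - 1) :=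
        mul_le_mul_of_nonneg_left (by linarith) hC0
      have hCe : C * (Real.exp 1 - 1) = Real.exp ((τ * ς) ^ α) - 1 := by
        rw [hC]; field_simp
      linarith
    exact hfin.trans (Real.exp_le_exp.2 (le_max_left _ _))
  · -- large case : τς > 1
    have hα1 : 0 < α - 1 := by linarith
    have hconj : Real.HolderConjugate (α/(α-1)) α := by
      rw [Real.holderConjugate_iff]; constructor
      · rw [lt_div_iff₀ hα1]; linarith
      · field_simp; ring
    have hq0 : 0 ≤ α/(α-1) := by positivity
    have habs : ∀ ω, τ * Y ω ≤ (τ*ς) * |Y ω / ς| := by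
      intro ω
      calc τ * Y ω ≤ |τ * Y ω| := le_abs_self _
        _ = (τ*ς) * |Y ω / ς| := by
            rw [abs_mul, abs_of_nonneg hτ, abs_div, abs_of_pos hς]
            field_simp
    have hyoung : ∀ ω, τ * Y ω ≤ (τ*ς)^(α/(α-1))/(α/(α-1)) + |Y ω / ς| ^ α / α := by
      intro ω
      exact (habs ω).trans
        (Real.young_inequality_of_nonneg ht0 (abs_nonneg _) hconj)
    set K := Real.exp ((τ*ς)^(α/(α-1))/(α/(α-1))) with hK
    have hKpos : 0 < K := Real.exp_pos _
    set g : Ω → ℝ := fun ω => (Real.exp (|Y ω / ς| ^ α)) ^ ((1:ℝ)/α) with hg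
    have hpt : ∀ ω, Real.exp (τ * Y ω) ≤ K * g ω := by
      intro ω
      have := Real.exp_le_exp.2 (hyoung ω)
      rw [Real.exp_add] at this
      have heq : Real.exp (|Y ω / ς| ^ α / α)
          = (Real.exp (|Y ω / ς| ^ α)) ^ ((1:ℝ)/α) := by
        rw [← Real.exp_mul]
        congr 1
        field_simp
      rw [heq] at this
      exact this
    -- integrability of g
    have hgmeas : AEStronglyMeasurable g μ :=
      (Real.continuous_rpow_const (by positivity)).comp_aestronglyMeasurable
        hInt.aestronglyMeasurable
    have hgbound : ∀ ω, ‖g ω‖ ≤ Real.exp (|Y ω / ς| ^ α) := by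
      intro ω
      have h1e : 1 ≤ Real.exp (|Y ω / ς| ^ α) :=
        Real.one_le_exp (Real.rpow_nonneg (abs_nonneg _) α)
      have : g ω ≤ (Real.exp (|Y ω / ς| ^ α)) ^ (1:ℝ) := by
        apply Real.rpow_le_rpow_of_exponent_le h1e
        rw [div_le_one hα0]; linarith
      rw [Real.norm_eq_abs, abs_of_nonneg (Real.rpow_nonneg (Real.exp_pos _).le _)]
      rwa [Real.rpow_one] at this
    have hgInt : Integrable g μ :=
      Integrable.mono' hInt hgmeas (Filter.Eventually.of_forall hgbound)
    -- Jensen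
    have hjensen : ∫ ω, g ω ∂μ ≤ (∫ ω, Real.exp (|Y ω / ς| ^ α) ∂μ) ^ ((1:ℝ)/α) := by
      have hconc : ConcaveOn ℝ (Set.Ici 0) (fun w : ℝ => w ^ ((1:ℝ)/α)) :=
        Real.concaveOn_rpow (by positivity) (by rw [div_le_one hα0]; linarith)
      have := hconc.le_map_integral
        ((Real.continuous_rpow_const (by positivity)).continuousOn)
        isClosed_Ici
        (Filter.Eventually.of_forall fun ω => (Real.exp_pos (|Y ω / ς| ^ α)).le)
        hInt hgInt
      exact this
    have hint2 : ∫ ω, g ω ∂μ ≤ Real.exp (1/α) := by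
      have hnn : 0 ≤ ∫ ω, Real.exp (|Y ω / ς| ^ α) ∂μ :=
        integral_nonneg fun ω => (Real.exp_pos _).le
      have h2' : (∫ ω, Real.exp (|Y ω / ς| ^ α) ∂μ) ^ ((1:ℝ)/α) ≤ Real.exp (1/α) := by
        have := Real.rpow_le_rpow hnn hE (by positivity : (0:ℝ) ≤ (1:ℝ)/α)
        rwa [← Real.exp_mul, one_mul] at this
      exact hjensen.trans h2'
    have hmono := integral_mono_of_nonneg
      (Filter.Eventually.of_forall fun ω => (Real.exp_pos (τ * Y ω)).le)
      (hgInt.const_mul K)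
      (Filter.Eventually.of_forall hpt)
    have hKint : ∫ ω, K * g ω ∂μ = K * ∫ ω, g ω ∂μ := integral_const_mul K g
    have hfin : ∫ ω, Real.exp (τ * Y ω) ∂μ
        ≤ Real.exp ((τ*ς)^(α/(α-1))/(α/(α-1)) + 1/α) := by
      rw [Real.exp_add]
      calc ∫ ω, Real.exp (τ * Y ω) ∂μ ≤ ∫ ω, K * g ω ∂μ := hmono
        _ = K * ∫ ω, g ω ∂μ := hKint
        _ ≤ K * Real.exp (1/α) := mul_le_mul_of_nonneg_left hint2 hKpos.le
    -- exponent arithmetic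
    have hexp : (τ*ς)^(α/(α-1))/(α/(α-1)) + 1/α ≤ (τ*ς)^(α/(α-1)) := by
      have h1t : 1 ≤ (τ*ς)^(α/(α-1)) := Real.one_le_rpow ht1.le hq0
      have hsum : ((α/(α-1)))⁻¹ + α⁻¹ = 1 := hconj.inv_add_inv_eq_one
      have h3 : 1 * α⁻¹ ≤ (τ*ς)^(α/(α-1)) * α⁻¹ :=
        mul_le_mul_of_nonneg_right h1t (by positivity)
      have heq2 : (τ*ς)^(α/(α-1)) * (α/(α-1))⁻¹ + (τ*ς)^(α/(α-1)) * α⁻¹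
          = (τ*ς)^(α/(α-1)) := by rw [← mul_add, hsum, mul_one]
      rw [div_eq_mul_inv, one_div]
      linarith
    calc ∫ ω, Real.exp (τ * Y ω) ∂μ ≤ _ := hfin
      _ ≤ Real.exp ((τ*ς)^(α/(α-1))) := Real.exp_le_exp.2 hexp
      _ ≤ Real.exp (max ((τ * ς) ^ α) ((τ * ς) ^ (α / (α - 1)))) :=
          Real.exp_le_exp.2 (le_max_right _ _)
end

section
/- Let H_f ≥ 0, ν ∈ (0,1), and ε > 0. Define L(ε) = H_f^{2/(1+ν)}·(4/ε)^{(1-ν)/(1+ν)}. Then for every r ≥ 0, (H_f/(1+ν))·r^{1+ν} ≤ (1/2)·L(ε)·r² + ε/8. -/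
theorem stmt10 (Hf ν ε : ℝ) (hH : 0 ≤ Hf) (hν : ν ∈ Set.Ioo (0 : ℝ) 1) (hε : 0 < ε) :
    ∀ r : ℝ, 0 ≤ r →
      Hf / (1 + ν) * r ^ (1 + ν) ≤
        (1 / 2) * (Hf ^ (2 / (1 + ν)) * (4 / ε) ^ ((1 - ν) / (1 + ν))) * r ^ (2 : ℝ)
          + ε / 8 := by
  obtain ⟨hν0, hν1⟩ := hν
  have hA : (0:ℝ) < 1 + ν := by linarith
  have hB : (0:ℝ) < 1 - ν := by linarith
  intro r hr
  rcases eq_or_lt_of_le hH with hH0 | hH0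
  · rw [← hH0]
    have : ((0:ℝ)) ^ (2 / (1 + ν)) = 0 := by
      rw [Real.zero_rpow]; positivity
    rw [this]
    simp
    positivity
  · set L : ℝ := Hf ^ (2 / (1 + ν)) * (4 / ε) ^ ((1 - ν) / (1 + ν)) with hLdef
    have hL : 0 < L := by positivity
    set x : ℝ := (L / (1 + ν)) ^ ((1 + ν) / 2) * r ^ (1 + ν) with hxdef
    set y : ℝ := Hf / ((1 + ν) ^ ((1 - ν) / 2) * L ^ ((1 + ν) / 2)) with hydef
    have hx : 0 ≤ x := by positivity
    have hy : 0 ≤ y := by positivity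
    have hpq : (2 / (1 + ν)).HolderConjugate (2 / (1 - ν)) := by
      rw [Real.holderConjugate_iff]; constructor
      · rw [lt_div_iff₀ hA]; linarith
      · rw [inv_div, inv_div]; ring
    have key := Real.young_inequality_of_nonneg hx hy hpq
    have p1 : (0:ℝ) < (1 + ν) ^ ((1 + ν) / 2) := by positivity
    have p2 : (0:ℝ) < (1 + ν) ^ ((1 - ν) / 2) := by positivity
    have p3 : (0:ℝ) < L ^ ((1 + ν) / 2) := by positivity
    have hAe : (1 + ν) ^ ((1 + ν) / 2) * (1 + ν) ^ ((1 - ν) / 2) = 1 + ν := by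
      rw [← Real.rpow_add hA, show (1 + ν) / 2 + (1 - ν) / 2 = 1 by ring, Real.rpow_one]
    have h1 : x * y = Hf / (1 + ν) * r ^ (1 + ν) := by
      have hAe2 : (1 + ν) ^ ((1 + ν) / 2) * ((1 + ν) ^ ((1 - ν) / 2) * L ^ ((1 + ν) / 2))
          = (1 + ν) * L ^ ((1 + ν) / 2) := by rw [← mul_assoc, hAe]
      rw [hxdef, hydef, Real.div_rpow hL.le hA.le]
      field_simp
      linear_combination (-(r ^ (1 + ν))) * hAe
    have e1 : (1 + ν) / 2 * (2 / (1 + ν)) = 1 := by field_simp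
    have e2 : (1 + ν) * (2 / (1 + ν)) = 2 := by field_simp
    have h2 : x ^ (2 / (1 + ν)) / (2 / (1 + ν)) = 1 / 2 * L * r ^ (2:ℝ) := by
      rw [hxdef, Real.mul_rpow (by positivity) (Real.rpow_nonneg hr _),
        ← Real.rpow_mul (by positivity), ← Real.rpow_mul hr, e1, e2, Real.rpow_one]
      field_simp
    have hLq : L ^ ((1 + ν) / (1 - ν)) = Hf ^ (2 / (1 - ν)) * (4 / ε) := by
      rw [hLdef, Real.mul_rpow (by positivity) (by positivity),
        ← Real.rpow_mul hH, ← Real.rpow_mul (by positivity : (0:ℝ) ≤ 4/ε)]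
      have e3 : 2 / (1 + ν) * ((1 + ν) / (1 - ν)) = 2 / (1 - ν) := by field_simp
      have e4 : (1 - ν) / (1 + ν) * ((1 + ν) / (1 - ν)) = 1 := by field_simp
      rw [e3, e4, Real.rpow_one]
    have h3 : y ^ (2 / (1 - ν)) / (2 / (1 - ν)) ≤ ε / 8 := by
      have e5 : (1 - ν) / 2 * (2 / (1 - ν)) = 1 := by field_simp
      have e6 : (1 + ν) / 2 * (2 / (1 - ν)) = (1 + ν) / (1 - ν) := by field_simp
      have hyq : y ^ (2 / (1 - ν)) = ε / (4 * (1 + ν)) := by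
        rw [hydef, Real.div_rpow hH (by positivity),
          Real.mul_rpow (by positivity) (by positivity),
          ← Real.rpow_mul hA.le, ← Real.rpow_mul hL.le, e5, e6, Real.rpow_one, hLq]
        have hp : (0:ℝ) < Hf ^ (2 / (1 - ν)) := Real.rpow_pos_of_pos hH0 _
        field_simp
      rw [hyq]
      have heq : ε / (4 * (1 + ν)) / (2 / (1 - ν)) = ε * (1 - ν) / (8 * (1 + ν)) := by
        field_simp; ring
      rw [heq, div_le_div_iff₀ (by positivity) (by norm_num)]
      nlinarith
    rw [h1, h2] at key
    linarith [key, h3]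
end

section
/- Let f satisfy the hybrid condition: for all x, y ∈ dom f and subgradients, f(y) ≤ f(x) + ⟨f'(x), y - x⟩ + (L_f/2)‖y-x‖² + (H_f/(1+ν))‖y-x‖^{1+ν} + M_f‖y-x‖ with L_f, H_f, M_f ≥ 0, ν ∈ (0,1). Then for every ε > 0, setting L(ε) = H_f^{2/(1+ν)}·(4/ε)^{(1-ν)/(1+ν)}, it holds for all x, y ∈ dom f and f'(x) ∈ ∂f(x) that f(y) ≤ f(x) + ⟨f'(x), y - x⟩ + (1/2)·(L_f + L(ε))·‖y - x‖² + M_f·‖y - x‖ + ε/8. -/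
/-- `g` is a subgradient of `f` at `x` relative to the set `s`. -/
def HasSubgradAt {E : Type*} [NormedAddCommGroup E] [InnerProductSpace ℝ E]
    (f : E → ℝ) (s : Set E) (g x : E) : Prop :=
  ∀ y ∈ s, f x + (inner ℝ g (y - x) : ℝ) ≤ f y

lemma key (H ν ε t : ℝ) (hH : 0 ≤ H) (hν : ν ∈ Set.Ioo (0:ℝ) 1) (hε : 0 < ε) (ht : 0 ≤ t) :
    H / (1 + ν) * t ^ (1 + ν) ≤
      (1/2) * (H ^ (2/(1+ν)) * (4/ε) ^ ((1-ν)/(1+ν))) * t ^ 2 + ε / 8 := by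
  obtain ⟨hν0, hν1⟩ := hν
  have h1ν : (0:ℝ) < 1 + ν := by linarith
  set L : ℝ := H ^ (2/(1+ν)) * (4/ε) ^ ((1-ν)/(1+ν)) with hLdef
  have hLnn : 0 ≤ L := by positivity
  have key2 : H * t ^ (1 + ν) ≤ (1+ν)/2 * (L * t^2) + (1-ν)/2 * (ε/4) := by
    have hG := Real.geom_mean_le_arith_mean2_weighted
      (w₁ := (1+ν)/2) (w₂ := (1-ν)/2) (p₁ := L * t^2) (p₂ := ε/4)
      (by linarith) (by linarith) (by positivity) (by positivity) (by ring)
    have heq : (L * t^2) ^ ((1+ν)/2) * (ε/4) ^ ((1-ν)/2) = H * t ^ (1+ν) := by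
      rw [Real.mul_rpow hLnn (by positivity), hLdef,
        Real.mul_rpow (by positivity) (by positivity),
        ← Real.rpow_natCast t 2, ← Real.rpow_mul ht, ← Real.rpow_mul hH,
        ← Real.rpow_mul (by positivity)]
      have e1 : 2/(1+ν) * ((1+ν)/2) = 1 := by field_simp
      have e2 : (1-ν)/(1+ν) * ((1+ν)/2) = (1-ν)/2 := by field_simp
      have e3 : ((2:ℕ):ℝ) * ((1+ν)/2) = 1 + ν := by push_cast; ring
      rw [e1, e2, e3, Real.rpow_one]
      have e4 : (4/ε) ^ ((1-ν)/2) * (ε/4) ^ ((1-ν)/2) = 1 := by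
        rw [← Real.mul_rpow (by positivity) (by positivity)]
        rw [show (4/ε) * (ε/4) = 1 by field_simp, Real.one_rpow]
      linear_combination (H * t ^ (1+ν)) * e4
    rw [heq] at hG
    linarith
  have htn : 0 ≤ t ^ (1+ν) := Real.rpow_nonneg ht _
  have ht2 : 0 ≤ t ^ 2 := by positivity
  rw [div_mul_eq_mul_div, div_le_iff₀ h1ν]
  have hle : (1-ν)/2 * (ε/4) ≤ ε/8 := by nlinarith
  nlinarith [mul_le_mul_of_nonneg_right key2 (le_of_lt h1ν), mul_nonneg hLnn ht2]

theorem stmt11 {n : ℕ} (f : EuclideanSpace ℝ (Fin n) → ℝ)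
    (s : Set (EuclideanSpace ℝ (Fin n)))
    (hs : Convex ℝ s) (hf : ConvexOn ℝ s f)
    (Lf Hf Mf ν ε : ℝ) (hL : 0 ≤ Lf) (hH : 0 ≤ Hf) (hM : 0 ≤ Mf)
    (hν : ν ∈ Set.Ioo (0 : ℝ) 1) (hε : 0 < ε)
    (hdesc : ∀ x ∈ s, ∀ y ∈ s, ∀ gx : EuclideanSpace ℝ (Fin n), HasSubgradAt f s gx x →
      f y ≤ f x + (inner ℝ gx (y - x) : ℝ) + Lf / 2 * ‖y - x‖ ^ 2 +
        Hf / (1 + ν) * ‖y - x‖ ^ (1 + ν) + Mf * ‖y - x‖) :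
    ∀ x ∈ s, ∀ y ∈ s, ∀ gx : EuclideanSpace ℝ (Fin n), HasSubgradAt f s gx x →
      f y ≤ f x + (inner ℝ gx (y - x) : ℝ) +
        (1 / 2) * (Lf + Hf ^ (2 / (1 + ν)) * (4 / ε) ^ ((1 - ν) / (1 + ν))) * ‖y - x‖ ^ 2 +
        Mf * ‖y - x‖ + ε / 8 := by
  intro x hx y hy gx hgx
  have h1 := hdesc x hx y hy gx hgx
  have h2 := key Hf ν ε ‖y - x‖ hH hν hε (norm_nonneg _)
  linarith
end
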